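/- Let a ≤ 0, let W : ℝ → [0,∞) vanish on (−∞,0) and be continuous on [0,∞), let k : ℝ → [0,∞) be bounded and measurable, and let Z : ℝ → [0,∞) be continuous. Set K(x,y) = W(x−y)·k(y) for y ≤ x and K(x,y) = 0 for x < y, and let K_m be the iterated kernels. Then: (a) for all y ≤ x the series R(x,y) := Σ_{m=1}^∞ K_m(x,y) converges; (b) the function H(x) := Z(x) + ∫_a^x R(x,y) Z(y) dy is finite and continuous on ℝ; and (c) H satisfies the Volterra equation H(x) = Z(x) + ∫_a^x W(x−y) k(y) H(y) dy for all x ∈ ℝ. -/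

import Mathlib

/-!
The kernel `K(x,y) = W(x-y) k(y)` vanishes for `x < y` and is bounded on every window
`a ≤ y, x ≤ b`. For such kernels `|K_{m+1}(x,y)| ≤ B^{m+1} (x-y)^m / m!`, so the Neumann series
`R = Σ K_m` converges and is again a bounded Volterra kernel, and dominated convergence gives the
resolvent identity `K ∘ R = R - K`. By Fubini on a triangle, composing Volterra integral operators
amounts to composing their kernels, hence `K(Z + RZ) = KZ + (R - K)Z = RZ`: this is the Volterra
equation for `H = Z + RZ`. Continuity of `H` then follows from `H = Z + KH` by dominated
convergence in `x`, since `x ↦ W(x - y)` is continuous at every `x ≠ y`.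
-/

open MeasureTheory Set

/-- The iterated kernels: `K₁ = K` and `K_m(x,y) = ∫_y^x K(x,z) K_{m-1}(z,y) dz` for `m ≥ 2`. -/
noncomputable def iterK (K : ℝ → ℝ → ℝ) : ℕ → ℝ → ℝ → ℝ
  | 0 => fun _ _ => 0
  | 1 => K
  | m + 2 => fun x y => ∫ z in y..x, K x z * iterK K (m + 1) z y

/-- The kernel `K(x,y) = W(x-y)·k(y)` for `y ≤ x`, and `0` for `x < y`. -/
noncomputable def volKernel (W k : ℝ → ℝ) : ℝ → ℝ → ℝ :=
  fun x y => if y ≤ x then W (x - y) * k y else 0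

/-- The resolventKer kernel `R(x,y) = Σ_{m=1}^∞ K_m(x,y)`. -/
noncomputable def resolventKer (W k : ℝ → ℝ) (x y : ℝ) : ℝ :=
  ∑' m : ℕ, iterK (volKernel W k) (m + 1) x y

/-- The candidate solution `H(x) = Z(x) + ∫_a^x R(x,y) Z(y) dy`. -/
noncomputable def resolventH (W k Z : ℝ → ℝ) (a x : ℝ) : ℝ :=
  Z x + ∫ y in a..x, resolventKer W k x y * Z y

open Filter Topology Function

structure IsVolterraKernel (K : ℝ → ℝ → ℝ) : Prop where
  eq_zero_of_lt : ∀ x y, x < y → K x y = 0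
  measurable : Measurable (uncurry K)
  bounded : ∀ a b, ∃ B, 0 ≤ B ∧ ∀ x y, a ≤ y → x ≤ b → |K x y| ≤ B

noncomputable def volterraIntegral (K : ℝ → ℝ → ℝ) (a : ℝ) (f : ℝ → ℝ) (x : ℝ) : ℝ :=
  ∫ y in a..x, K x y * f y

noncomputable def volterraComp (K L : ℝ → ℝ → ℝ) (x t : ℝ) : ℝ :=
  ∫ y in t..x, K x y * L y t

noncomputable def volterraResolvent (K : ℝ → ℝ → ℝ) (x y : ℝ) : ℝ :=
  ∑' m : ℕ, iterK K (m + 1) x y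

theorem measurable_intervalIntegral_of_uncurry {α : Type*} [MeasurableSpace α]
    {F : α → ℝ → ℝ} (hF : Measurable (uncurry F)) {lo hi : α → ℝ}
    (hlo : Measurable lo) (hhi : Measurable hi) :
    Measurable fun p => ∫ z in lo p..hi p, F p z := by
  have hIoc : ∀ {u v : α → ℝ}, Measurable u → Measurable v →
      Measurable fun p => ∫ z in Ioc (u p) (v p), F p z := by
    intro u v hu hv
    have hS : MeasurableSet {q : α × ℝ | u q.1 < q.2 ∧ q.2 ≤ v q.1} :=
      (measurableSet_lt (hu.comp measurable_fst) measurable_snd).inter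
        (measurableSet_le measurable_snd (hv.comp measurable_fst))
    convert ((hF.indicator hS).stronglyMeasurable.integral_prod_right' (ν := volume)).measurable
      using 2 with p
    rw [← integral_indicator measurableSet_Ioc]
    rfl
  simp only [intervalIntegral]
  exact (hIoc hlo hhi).sub (hIoc hhi hlo)

theorem setIntegral_Ioc_eq_intervalIntegral {g : ℝ → ℝ} {a b t x : ℝ} (hat : a ≤ t)
    (hxb : x ≤ b) (hlo : ∀ y ∈ Ioo a t, g y = 0) (hhi : ∀ y, x < y → g y = 0) :
    ∫ y in Ioc a b, g y = ∫ y in t..x, g y := by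
  rcases le_or_gt t x with htx | hxt
  · rw [intervalIntegral.integral_of_le htx]
    refine setIntegral_eq_of_subset_of_ae_sdiff_eq_zero measurableSet_Ioc.nullMeasurableSet
      (Ioc_subset_Ioc hat hxb) ?_
    filter_upwards [volume.ae_ne t] with y hyt hy
    rcases lt_or_gt_of_ne hyt with hy' | hy'
    · exact hlo y ⟨hy.1.1, hy'⟩
    · exact hhi y (lt_of_not_ge fun h => hy.2 ⟨hy', h⟩)
  · rw [intervalIntegral.integral_symm, intervalIntegral.integral_of_le hxt.le,
      setIntegral_eq_zero_of_forall_eq_zero (t := Ioc x t) fun y hy => hhi y hy.1, neg_zero]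
    refine setIntegral_eq_zero_of_forall_eq_zero fun y hy => ?_
    rcases lt_or_ge y t with hyt | hty
    · exact hlo y ⟨hy.1, hyt⟩
    · exact hhi y (hxt.trans_le hty)

theorem volterraIntegral_eq_setIntegral_Ioc {K : ℝ → ℝ → ℝ} (hK : ∀ x y, x < y → K x y = 0)
    {a b x : ℝ} (f : ℝ → ℝ) (hxb : x ≤ b) :
    volterraIntegral K a f x = ∫ y in Ioc a b, K x y * f y :=
  (setIntegral_Ioc_eq_intervalIntegral le_rfl hxb (by simp)
    fun y hy => by rw [hK x y hy, zero_mul]).symm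

theorem volterraComp_eq_zero_of_lt {K L : ℝ → ℝ → ℝ} (hK : ∀ x y, x < y → K x y = 0) {x t : ℝ}
    (hxt : x < t) : volterraComp K L x t = 0 := by
  change volterraIntegral K t (fun y => L y t) x = 0
  rw [volterraIntegral_eq_setIntegral_Ioc hK _ le_rfl, Ioc_eq_empty (not_lt.2 hxt.le),
    Measure.restrict_empty, integral_zero_measure]

namespace IsVolterraKernel

variable {K L : ℝ → ℝ → ℝ} {a b : ℝ} {f : ℝ → ℝ}

theorem measurable_volterraIntegral (hK : IsVolterraKernel K) (hf : Measurable f) :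
    Measurable (volterraIntegral K a f) :=
  measurable_intervalIntegral_of_uncurry (hK.measurable.mul (hf.comp measurable_snd))
    measurable_const measurable_id

theorem integrableOn_mul (hK : IsVolterraKernel K) (hf : IntegrableOn f (Ioc a b)) (x : ℝ) :
    IntegrableOn (fun y => K x y * f y) (Ioc a b) := by
  obtain ⟨B, -, hB⟩ := hK.bounded a x
  refine hf.bdd_mul hK.measurable.of_uncurry_left.aestronglyMeasurable (c := B) ?_
  filter_upwards [ae_restrict_mem measurableSet_Ioc] with y hy
  exact hB x y hy.1.le le_rfl

theorem abs_volterraIntegral_le (hK : IsVolterraKernel K) {B : ℝ}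
    (hB : ∀ x y, a ≤ y → x ≤ b → |K x y| ≤ B) (hf : IntegrableOn f (Ioc a b)) {x : ℝ}
    (hxb : x ≤ b) :
    |volterraIntegral K a f x| ≤ B * ∫ y in Ioc a b, |f y| := by
  rw [volterraIntegral_eq_setIntegral_Ioc hK.eq_zero_of_lt f hxb, ← Real.norm_eq_abs,
    ← integral_const_mul]
  refine norm_integral_le_of_norm_le (hf.abs.const_mul B) ?_
  filter_upwards [ae_restrict_mem measurableSet_Ioc] with y hy
  rw [Real.norm_eq_abs, abs_mul]
  exact mul_le_mul_of_nonneg_right (hB x y hy.1.le hxb) (abs_nonneg _)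

theorem integrableOn_volterraIntegral (hK : IsVolterraKernel K) (hfm : Measurable f)
    (hf : IntegrableOn f (Ioc a b)) : IntegrableOn (volterraIntegral K a f) (Ioc a b) := by
  obtain ⟨B, -, hB⟩ := hK.bounded a b
  refine Measure.integrableOn_of_bounded measure_Ioc_lt_top.ne
    (hK.measurable_volterraIntegral hfm).aestronglyMeasurable
    (M := B * ∫ y in Ioc a b, |f y|) ?_
  filter_upwards [ae_restrict_mem measurableSet_Ioc] with x hx
  exact hK.abs_volterraIntegral_le hB hf hx.2

theorem continuous_volterraIntegral (hK : IsVolterraKernel K)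
    (hKc : ∀ x₀, ∀ᵐ y, ContinuousAt (fun x => K x y) x₀)
    (hf : ∀ b, IntegrableOn f (Ioc a b)) : Continuous (volterraIntegral K a f) := by
  refine continuous_iff_continuousAt.2 fun x₀ => ?_
  set b := max a x₀ + 1
  have hx₀b : x₀ < b := by linarith [le_max_right a x₀]
  obtain ⟨B, -, hB⟩ := hK.bounded a b
  have hloc : (fun x => ∫ y in Ioc a b, K x y * f y) =ᶠ[𝓝 x₀] volterraIntegral K a f := by
    filter_upwards [Iio_mem_nhds hx₀b] with x hx
    exact (volterraIntegral_eq_setIntegral_Ioc hK.eq_zero_of_lt f hx.le).symm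
  refine ContinuousAt.congr ?_ hloc
  refine continuousAt_of_dominated (bound := fun y => B * ‖f y‖)
    (Eventually.of_forall fun x => (hK.integrableOn_mul (hf b) x).aestronglyMeasurable) ?_
    ((hf b).norm.const_mul B) ?_
  · filter_upwards [Iio_mem_nhds hx₀b] with x hx
    filter_upwards [ae_restrict_mem measurableSet_Ioc] with y hy
    rw [norm_mul]
    exact mul_le_mul_of_nonneg_right (hB x y hy.1.le hx.le) (norm_nonneg _)
  · filter_upwards [ae_restrict_of_ae (hKc x₀)] with y hy
    exact hy.mul continuousAt_const

theorem comp (hK : IsVolterraKernel K) (hL : IsVolterraKernel L) :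
    IsVolterraKernel (volterraComp K L) where
  eq_zero_of_lt _ _ := volterraComp_eq_zero_of_lt hK.eq_zero_of_lt
  measurable :=
    measurable_intervalIntegral_of_uncurry (F := fun (p : ℝ × ℝ) y => K p.1 y * L y p.2)
      ((hK.measurable.comp (measurable_fst.fst.prodMk measurable_snd)).mul
        (hL.measurable.comp (measurable_snd.prodMk measurable_fst.snd)))
      measurable_snd measurable_fst
  bounded a b := by
    obtain ⟨BK, hBK0, hBK⟩ := hK.bounded a b
    obtain ⟨BL, hBL0, hBL⟩ := hL.bounded a b
    refine ⟨BK * BL * |b - a|, by positivity, fun x t hat hxb => ?_⟩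
    rcases lt_or_ge x t with hxt | htx
    · rw [volterraComp_eq_zero_of_lt hK.eq_zero_of_lt hxt, abs_zero]
      positivity
    rw [← Real.norm_eq_abs]
    calc ‖volterraComp K L x t‖ ≤ BK * BL * |x - t| := by
          refine intervalIntegral.norm_integral_le_of_norm_le_const fun y hy => ?_
          rw [uIoc_of_le htx] at hy
          rw [norm_mul]
          exact mul_le_mul (hBK x y (hat.trans hy.1.le) hxb) (hBL y t hat (hy.2.trans hxb))
            (norm_nonneg _) hBK0
      _ ≤ BK * BL * |b - a| := by gcongr

theorem volterraIntegral_volterraIntegral (hK : IsVolterraKernel K) (hL : IsVolterraKernel L)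
    (hf : IntegrableOn f (Ioc a b)) {x : ℝ} (hxb : x ≤ b) :
    volterraIntegral K a (volterraIntegral L a f) x =
      volterraIntegral (volterraComp K L) a f x := by
  obtain ⟨BK, hBK0, hBK⟩ := hK.bounded a b
  obtain ⟨BL, -, hBL⟩ := hL.bounded a b
  have hprod : Integrable (uncurry fun y t => K x y * (L y t * f t))
      ((volume.restrict (Ioc a b)).prod (volume.restrict (Ioc a b))) := by
    have hg := (integrableOn_const (μ := (volume : Measure ℝ)) (s := Ioc a b) (C := BK * BL)
      measure_Ioc_lt_top.ne).mul_prod hf.norm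
    refine hg.mono' ?_ ?_
    · exact (hK.measurable.of_uncurry_left.comp measurable_fst).aestronglyMeasurable.mul
        (hL.measurable.aestronglyMeasurable.mul hf.aestronglyMeasurable.comp_snd)
    · rw [Measure.prod_restrict]
      filter_upwards [ae_restrict_mem (measurableSet_Ioc.prod measurableSet_Ioc)]
        with ⟨y, t⟩ ⟨hy, ht⟩
      simp only [uncurry_apply_pair, norm_mul, Real.norm_eq_abs, ← mul_assoc]
      exact mul_le_mul_of_nonneg_right (mul_le_mul (hBK x y hy.1.le hxb) (hBL y t ht.1.le hy.2)
        (abs_nonneg _) hBK0) (abs_nonneg _)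
  calc volterraIntegral K a (volterraIntegral L a f) x
      = ∫ y in Ioc a b, ∫ t in Ioc a b, K x y * (L y t * f t) := by
        rw [volterraIntegral_eq_setIntegral_Ioc hK.eq_zero_of_lt _ hxb]
        refine setIntegral_congr_fun measurableSet_Ioc fun y hy => ?_
        rw [volterraIntegral_eq_setIntegral_Ioc hL.eq_zero_of_lt f hy.2, integral_const_mul]
    _ = ∫ t in Ioc a b, ∫ y in Ioc a b, K x y * (L y t * f t) := integral_integral_swap hprod
    _ = ∫ t in Ioc a b, volterraComp K L x t * f t := by
        refine setIntegral_congr_fun measurableSet_Ioc fun t ht => ?_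
        simp only [← mul_assoc]
        rw [integral_mul_const, volterraComp,
          setIntegral_Ioc_eq_intervalIntegral ht.1.le hxb
            (fun y hy => by rw [hL.eq_zero_of_lt y t hy.2, mul_zero])
            fun y hy => by rw [hK.eq_zero_of_lt x y hy, zero_mul]]
    _ = volterraIntegral (volterraComp K L) a f x :=
        (volterraIntegral_eq_setIntegral_Ioc (hK.comp hL).eq_zero_of_lt f hxb).symm

end IsVolterraKernel

theorem hasSum_pow_succ_mul_pow_div_factorial (B T : ℝ) :
    HasSum (fun m : ℕ => B ^ (m + 1) * T ^ m / m.factorial) (B * Real.exp (B * T)) := by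
  have hterm : (fun m : ℕ => B ^ (m + 1) * T ^ m / m.factorial) =
      fun m => B * ((B * T) ^ m / m.factorial) := by
    funext m
    rw [mul_pow, pow_succ]
    ring
  rw [hterm, Real.exp_eq_exp_ℝ]
  exact (NormedSpace.expSeries_div_hasSum_exp (B * T)).mul_left B

-- `iterK K (m + 2)` is `volterraComp K (iterK K (m + 1))` by definition.
theorem isVolterraKernel_iterK {K : ℝ → ℝ → ℝ} (hK : IsVolterraKernel K) :
    ∀ m : ℕ, IsVolterraKernel (iterK K (m + 1))
  | 0 => hK
  | m + 1 => hK.comp (isVolterraKernel_iterK hK m)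

theorem abs_iterK_le {K : ℝ → ℝ → ℝ} {a b B : ℝ} (hB0 : 0 ≤ B)
    (hB : ∀ x y, a ≤ y → x ≤ b → |K x y| ≤ B) (m : ℕ) :
    ∀ x y, a ≤ y → y ≤ x → x ≤ b →
      |iterK K (m + 1) x y| ≤ B ^ (m + 1) * (x - y) ^ m / m.factorial := by
  induction m with
  | zero =>
    intro x y hay _ hxb
    simpa [iterK] using hB x y hay hxb
  | succ m ih =>
    intro x y hay hyx hxb
    rw [← Real.norm_eq_abs]
    calc ‖iterK K (m + 2) x y‖
        ≤ ∫ z in y..x, B ^ (m + 2) / m.factorial * (z - y) ^ m := by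
          refine intervalIntegral.norm_integral_le_of_norm_le hyx
            (ae_of_all _ fun z hz => ?_) (Continuous.intervalIntegrable (by fun_prop) _ _)
          rw [norm_mul, Real.norm_eq_abs, Real.norm_eq_abs]
          calc |K x z| * |iterK K (m + 1) z y|
              ≤ B * (B ^ (m + 1) * (z - y) ^ m / m.factorial) :=
                mul_le_mul (hB x z (hay.trans hz.1.le) hxb) (ih z y hay hz.1.le (hz.2.trans hxb))
                  (abs_nonneg _) hB0
            _ = B ^ (m + 2) / m.factorial * (z - y) ^ m := by ring
      _ = B ^ (m + 1 + 1) * (x - y) ^ (m + 1) / (m + 1).factorial := by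
          rw [intervalIntegral.integral_const_mul,
            intervalIntegral.integral_comp_sub_right (fun z => z ^ m), sub_self, integral_pow,
            zero_pow m.succ_ne_zero, sub_zero, Nat.factorial_succ]
          push_cast
          field_simp

theorem IsVolterraKernel.summable_iterK {K : ℝ → ℝ → ℝ} (hK : IsVolterraKernel K) (x y : ℝ) :
    Summable fun m => iterK K (m + 1) x y := by
  rcases lt_or_ge x y with hxy | hyx
  · simp only [fun m => (isVolterraKernel_iterK hK m).eq_zero_of_lt x y hxy]
    exact summable_zero
  obtain ⟨B, hB0, hB⟩ := hK.bounded y x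
  exact (hasSum_pow_succ_mul_pow_div_factorial B (x - y)).summable.of_norm_bounded
    fun m => abs_iterK_le hB0 hB m x y le_rfl hyx le_rfl

theorem abs_volterraResolvent_le {K : ℝ → ℝ → ℝ} (hK : IsVolterraKernel K) {a b B : ℝ}
    (hB0 : 0 ≤ B) (hB : ∀ x y, a ≤ y → x ≤ b → |K x y| ≤ B) (x y : ℝ) (hay : a ≤ y)
    (hxb : x ≤ b) : |volterraResolvent K x y| ≤ B * Real.exp (B * (b - a)) := by
  rcases lt_or_ge x y with hxy | hyx
  · simp only [volterraResolvent, fun m => (isVolterraKernel_iterK hK m).eq_zero_of_lt x y hxy,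
      tsum_zero, abs_zero]
    positivity
  rw [← Real.norm_eq_abs]
  refine tsum_of_norm_bounded (hasSum_pow_succ_mul_pow_div_factorial B (b - a)) fun m => ?_
  refine (abs_iterK_le hB0 hB m x y hay hyx hxb).trans ?_
  gcongr

theorem isVolterraKernel_volterraResolvent {K : ℝ → ℝ → ℝ} (hK : IsVolterraKernel K) :
    IsVolterraKernel (volterraResolvent K) where
  eq_zero_of_lt x y hxy := by
    simp only [volterraResolvent, fun m => (isVolterraKernel_iterK hK m).eq_zero_of_lt x y hxy,
      tsum_zero]
  measurable := Measurable.tsum fun m => (isVolterraKernel_iterK hK m).measurable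
  bounded a b := by
    obtain ⟨B, hB0, hB⟩ := hK.bounded a b
    exact ⟨B * Real.exp (B * (b - a)), by positivity, abs_volterraResolvent_le hK hB0 hB⟩

namespace IsVolterraKernel

variable {K : ℝ → ℝ → ℝ} {a : ℝ}

theorem volterraComp_volterraResolvent (hK : IsVolterraKernel K) (x y : ℝ) :
    volterraComp K (volterraResolvent K) x y = volterraResolvent K x y - K x y := by
  rcases lt_or_ge x y with hxy | hyx
  · rw [volterraComp_eq_zero_of_lt hK.eq_zero_of_lt hxy,
      (isVolterraKernel_volterraResolvent hK).eq_zero_of_lt x y hxy, hK.eq_zero_of_lt x y hxy,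
      sub_zero]
  obtain ⟨B, hB0, hB⟩ := hK.bounded y x
  have htail : HasSum (fun m => iterK K (m + 2) x y)
      (volterraComp K (volterraResolvent K) x y) := by
    refine intervalIntegral.hasSum_integral_of_dominated_convergence
      (fun m _ => B * (B ^ (m + 1) * (x - y) ^ m / m.factorial))
      (fun m => (hK.measurable.of_uncurry_left.mul
        (isVolterraKernel_iterK hK m).measurable.of_uncurry_right).aestronglyMeasurable)
      (fun m => ae_of_all _ fun z hz => ?_)
      (ae_of_all _ fun _ _ =>
        ((hasSum_pow_succ_mul_pow_div_factorial B (x - y)).mul_left B).summable)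
      intervalIntegrable_const
      (ae_of_all _ fun z _ => (hK.summable_iterK z y).hasSum.mul_left (K x z))
    rw [uIoc_of_le hyx] at hz
    rw [norm_mul, Real.norm_eq_abs, Real.norm_eq_abs]
    refine mul_le_mul (hB x z hz.1.le le_rfl) ?_ (abs_nonneg _) hB0
    refine (abs_iterK_le hB0 hB m z y le_rfl hz.1.le hz.2).trans ?_
    gcongr
    exacts [sub_nonneg.2 hz.1.le, hz.2]
  rw [volterraResolvent, (hK.summable_iterK x y).tsum_eq_zero_add, htail.tsum_eq]
  simp [iterK]

theorem volterraIntegral_add {f g : ℝ → ℝ} {b x : ℝ} (hK : IsVolterraKernel K)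
    (hf : IntegrableOn f (Ioc a b)) (hg : IntegrableOn g (Ioc a b)) (hxb : x ≤ b) :
    volterraIntegral K a (f + g) x = volterraIntegral K a f x + volterraIntegral K a g x := by
  simp only [volterraIntegral_eq_setIntegral_Ioc hK.eq_zero_of_lt _ hxb, Pi.add_apply, mul_add]
  exact integral_add (hK.integrableOn_mul hf x) (hK.integrableOn_mul hg x)

theorem volterraIntegral_add_volterraIntegral_resolvent {Z : ℝ → ℝ} (hK : IsVolterraKernel K)
    (hZm : Measurable Z) (hZ : LocallyIntegrable Z) :
    volterraIntegral K a (Z + volterraIntegral (volterraResolvent K) a Z) =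
      volterraIntegral (volterraResolvent K) a Z := by
  funext x
  set b := max a x
  have hxb : x ≤ b := le_max_right a x
  have hR := isVolterraKernel_volterraResolvent hK
  have hZb : IntegrableOn Z (Ioc a b) :=
    (hZ.integrableOn_isCompact isCompact_Icc).mono_set Ioc_subset_Icc_self
  have hcomp : volterraIntegral (volterraComp K (volterraResolvent K)) a Z x =
      volterraIntegral (volterraResolvent K) a Z x - volterraIntegral K a Z x := by
    simp only [volterraIntegral_eq_setIntegral_Ioc (hK.comp hR).eq_zero_of_lt _ hxb,
      volterraIntegral_eq_setIntegral_Ioc hR.eq_zero_of_lt _ hxb,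
      volterraIntegral_eq_setIntegral_Ioc hK.eq_zero_of_lt _ hxb,
      hK.volterraComp_volterraResolvent, sub_mul]
    exact integral_sub (hR.integrableOn_mul hZb x) (hK.integrableOn_mul hZb x)
  rw [hK.volterraIntegral_add hZb (hR.integrableOn_volterraIntegral hZm hZb) hxb,
    hK.volterraIntegral_volterraIntegral hR hZb hxb, hcomp, add_sub_cancel]

theorem continuous_add_volterraIntegral_resolvent {Z : ℝ → ℝ} (hK : IsVolterraKernel K)
    (hKc : ∀ x₀, ∀ᵐ y, ContinuousAt (fun x => K x y) x₀) (hZ : Continuous Z) :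
    Continuous (Z + volterraIntegral (volterraResolvent K) a Z) := by
  have hH : ∀ b, IntegrableOn (Z + volterraIntegral (volterraResolvent K) a Z) (Ioc a b) :=
    fun b => hZ.integrableOn_Ioc.add
      ((isVolterraKernel_volterraResolvent hK).integrableOn_volterraIntegral hZ.measurable
        hZ.integrableOn_Ioc)
  have hfix := hK.volterraIntegral_add_volterraIntegral_resolvent (a := a) hZ.measurable
    hZ.locallyIntegrable
  exact hfix ▸ hZ.add (hK.continuous_volterraIntegral hKc hH)

end IsVolterraKernel

section volKernel

variable {W k : ℝ → ℝ}

theorem measurable_of_continuousOn_Ici (hW0 : ∀ x < (0:ℝ), W x = 0)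
    (hWc : ContinuousOn W (Ici 0)) : Measurable W := by
  classical
  have hpiece : (Ici (0:ℝ)).piecewise W (fun _ => 0) = W := by
    funext t
    by_cases ht : 0 ≤ t
    · simp [ht]
    · simp [ht, hW0 t (lt_of_not_ge ht)]
  exact hpiece ▸ hWc.measurable_piecewise continuousOn_const measurableSet_Ici

theorem continuousAt_of_continuousOn_Ici_of_ne_zero (hW0 : ∀ x < (0:ℝ), W x = 0)
    (hWc : ContinuousOn W (Ici 0)) {t : ℝ} (ht : t ≠ 0) : ContinuousAt W t := by
  rcases ht.lt_or_gt with h | h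
  · refine (continuousAt_const : ContinuousAt (fun _ => (0:ℝ)) t).congr ?_
    filter_upwards [Iio_mem_nhds h] with s hs
    exact (hW0 s hs).symm
  · exact hWc.continuousAt (Ici_mem_nhds h)

theorem volKernel_eq (hW0 : ∀ x < (0:ℝ), W x = 0) :
    volKernel W k = fun x y => W (x - y) * k y := by
  funext x y
  by_cases hyx : y ≤ x
  · exact if_pos hyx
  · rw [volKernel, if_neg hyx, hW0 _ (sub_neg.2 (lt_of_not_ge hyx)), zero_mul]

theorem isVolterraKernel_volKernel (hW0 : ∀ x < (0:ℝ), W x = 0) (hWc : ContinuousOn W (Ici 0))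
    (hk0 : ∀ y, 0 ≤ k y) (hkb : ∃ C, ∀ y, k y ≤ C) (hkm : Measurable k) :
    IsVolterraKernel (volKernel W k) where
  eq_zero_of_lt _ _ hxy := if_neg (not_le.2 hxy)
  measurable := by
    rw [volKernel_eq hW0]
    exact ((measurable_of_continuousOn_Ici hW0 hWc).comp (measurable_fst.sub measurable_snd)).mul
      (hkm.comp measurable_snd)
  bounded a b := by
    obtain ⟨C, hC⟩ := hkb
    obtain ⟨M, hM⟩ := isCompact_Icc.exists_bound_of_continuousOn
      (hWc.mono (Icc_subset_Ici_self : Icc 0 (b - a) ⊆ Ici 0))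
    refine ⟨max M 0 * max C 0, by positivity, fun x y hay hxb => ?_⟩
    rw [volKernel_eq hW0, abs_mul, abs_of_nonneg (hk0 y)]
    refine mul_le_mul ?_ ((hC y).trans (le_max_left _ _)) (hk0 y) (le_max_right _ _)
    rcases lt_or_ge (x - y) 0 with hneg | hnonneg
    · rw [hW0 _ hneg, abs_zero]
      exact le_max_right _ _
    · exact (hM _ ⟨hnonneg, by linarith⟩).trans (le_max_left _ _)

theorem continuousAt_volKernel (hW0 : ∀ x < (0:ℝ), W x = 0) (hWc : ContinuousOn W (Ici 0))
    (x₀ : ℝ) : ∀ᵐ y, ContinuousAt (fun x => volKernel W k x y) x₀ := by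
  filter_upwards [volume.ae_ne x₀] with y hy
  rw [volKernel_eq hW0]
  have hW := continuousAt_of_continuousOn_Ici_of_ne_zero hW0 hWc (sub_ne_zero.2 hy.symm)
  exact (hW.comp (f := fun x => x - y) (continuous_sub_right y).continuousAt).mul
    continuousAt_const

end volKernel

theorem stmt7_general (a : ℝ)
    (W : ℝ → ℝ) (hW0 : ∀ x < (0:ℝ), W x = 0)
    (hWc : ContinuousOn W (Ici 0))
    (k : ℝ → ℝ) (hknonneg : ∀ y, 0 ≤ k y) (hkbdd : ∃ C, ∀ y, k y ≤ C)
    (hkmeas : Measurable k)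
    (Z : ℝ → ℝ) (hZc : Continuous Z) :
    (∀ x y : ℝ, y ≤ x →
        Summable (fun m : ℕ => iterK (volKernel W k) (m + 1) x y)) ∧
      Continuous (resolventH W k Z a) ∧
      (∀ x : ℝ, resolventH W k Z a x =
        Z x + ∫ y in a..x, W (x - y) * k y * resolventH W k Z a y) := by
  have hK := isVolterraKernel_volKernel hW0 hWc hknonneg hkbdd hkmeas
  have hfix := hK.volterraIntegral_add_volterraIntegral_resolvent (a := a) hZc.measurable
    hZc.locallyIntegrable
  refine ⟨fun x y _ => hK.summable_iterK x y,
    hK.continuous_add_volterraIntegral_resolvent (continuousAt_volKernel hW0 hWc) hZc,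
    fun x => ?_⟩
  calc resolventH W k Z a x
      = Z x + volterraIntegral (volterraResolvent (volKernel W k)) a Z x := rfl
    _ = Z x + volterraIntegral (volKernel W k) a (resolventH W k Z a) x := by
        rw [← hfix]
        rfl
    _ = Z x + ∫ y in a..x, W (x - y) * k y * resolventH W k Z a y := by
        rw [volterraIntegral, volKernel_eq hW0]

/-- (a) the resolventKer series converges; (b) `H` is continuous; and
(c) `H` solves the Volterra equation `H(x) = Z(x) + ∫_a^x W(x-y) k(y) H(y) dy`. -/
theorem stmt7 (a : ℝ) (ha : a ≤ 0)
    (W : ℝ → ℝ) (hW0 : ∀ x < (0:ℝ), W x = 0) (hWnonneg : ∀ x, 0 ≤ W x)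
    (hWc : ContinuousOn W (Ici 0))
    (k : ℝ → ℝ) (hknonneg : ∀ y, 0 ≤ k y) (hkbdd : ∃ C, ∀ y, k y ≤ C)
    (hkmeas : Measurable k)
    (Z : ℝ → ℝ) (hZc : Continuous Z) (hZnonneg : ∀ x, 0 ≤ Z x) :
    (∀ x y : ℝ, y ≤ x →
        Summable (fun m : ℕ => iterK (volKernel W k) (m + 1) x y)) ∧
      Continuous (resolventH W k Z a) ∧
      (∀ x : ℝ, resolventH W k Z a x =
        Z x + ∫ y in a..x, W (x - y) * k y * resolventH W k Z a y) :=
  stmt7_general a W hW0 hWc k hknonneg hkbdd hkmeas Z hZc
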